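/- Let A ∈ SL(2,ℤ) with tr A > 2. For every automorphism φ of Γ_A = ℤ² ⋊_A ℤ, the Reidemeister number R(φ ∘ φ) of the square of φ is infinite. (Consequently the Reidemeister zeta function is not defined for any automorphism of Γ_A.) -/

import Mathlib

/-- Two elements `x, y` of a group `G` are `φ`-twisted conjugate if
`y = g * x * (φ g)⁻¹` for some `g : G`. -/
def twistedConj {G : Type*} [Group G] (φ : G →* G) (x y : G) : Prop :=
  ∃ g : G, y = g * x * (φ g)⁻¹

/-- The Reidemeister number of `φ` : the cardinality of the set of
`φ`-twisted conjugacy classes. -/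
noncomputable def reidemeisterNumber {G : Type*} [Group G] (φ : G →* G) : Cardinal :=
  Cardinal.mk (Quot (twistedConj φ))

/-- The additive automorphism of `ℤ²` given by an invertible `2 × 2` integer matrix. -/
def mulVecAut (U : (Matrix (Fin 2) (Fin 2) ℤ)ˣ) : AddAut (Fin 2 → ℤ) where
  toFun v := (U : Matrix (Fin 2) (Fin 2) ℤ).mulVec v
  invFun v := ((U⁻¹ : (Matrix (Fin 2) (Fin 2) ℤ)ˣ) : Matrix (Fin 2) (Fin 2) ℤ).mulVec v
  left_inv v := by
    simp only [Matrix.mulVec_mulVec, Units.inv_mul, Units.mul_inv, Matrix.one_mulVec]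
  right_inv v := by
    simp only [Matrix.mulVec_mulVec, Units.inv_mul, Units.mul_inv, Matrix.one_mulVec]
  map_add' v w := Matrix.mulVec_add _ v w

/-- The semidirect product `ℤ² ⋊_U ℤ`, where `(x, m) * (y, n) = (x + U^m y, m + n)`. -/
abbrev GammaGrp (U : (Matrix (Fin 2) (Fin 2) ℤ)ˣ) :=
  SemidirectProduct (Multiplicative (Fin 2 → ℤ)) (Multiplicative ℤ)
    (zpowersHom (MulAut (Multiplicative (Fin 2 → ℤ)))
      (AddEquiv.toMultiplicative (mulVecAut U)))

/-!
Since `det (A - 1) = 2 - tr A ≠ 0`, every `A`-invariant homomorphism from `ℤ²` to a torsion-free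
abelian group vanishes, so every homomorphism `Γ_A → ℤ` kills `ℤ²`. Hence an automorphism `φ`
induces a surjective endomorphism `n ↦ ±n` of `Γ_A / ℤ² ≅ ℤ`, and `φ ∘ φ` induces the identity.
The projection `Γ_A → ℤ` is then constant on `φ ∘ φ`-twisted classes and onto, so there are
infinitely many of them.
-/

universe u

open SemidirectProduct Matrix

theorem Matrix.det_sub_one_fin_two {R : Type*} [CommRing R] (A : Matrix (Fin 2) (Fin 2) R) :
    (A - 1).det = A.det - A.trace + 1 := by
  simp only [det_fin_two, trace_fin_two, sub_apply, one_apply_eq, one_apply_ne, ne_eq,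
    Fin.isValue, zero_ne_one, one_ne_zero, not_false_eq_true, sub_zero]
  ring

theorem AddMonoidHom.eq_zero_of_map_mulVec_eq {n M : Type*} [Fintype n] [DecidableEq n]
    [AddCommGroup M] [IsAddTorsionFree M] {A : Matrix n n ℤ} (hA : (A - 1).det ≠ 0)
    (g : (n → ℤ) →+ M) (hg : ∀ v, g (A *ᵥ v) = g v) : g = 0 := by
  have hker : ∀ w, g ((A - 1) *ᵥ w) = 0 := fun w => by
    rw [sub_mulVec, one_mulVec, map_sub, hg, sub_self]
  refine AddMonoidHom.ext fun v => ?_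
  have hdet : (A - 1) *ᵥ ((A - 1).adjugate *ᵥ v) = (A - 1).det • v := by
    rw [mulVec_mulVec, mul_adjugate, smul_mulVec, one_mulVec]
  have := hker ((A - 1).adjugate *ᵥ v)
  rwa [hdet, map_zsmul, IsAddTorsionFree.zsmul_eq_zero_iff_right hA] at this

theorem mk_le_reidemeisterNumber {G H : Type u} [Group G] [CommGroup H] {ψ : G →* G}
    {f : G →* H} (hf : Function.Surjective f) (hψ : f.comp ψ = f) :
    Cardinal.mk H ≤ reidemeisterNumber ψ := by
  have hconst : ∀ x y, twistedConj ψ x y → f x = f y := by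
    rintro x y ⟨g, rfl⟩
    rw [map_mul, map_mul, map_inv, ← MonoidHom.comp_apply f ψ, hψ, mul_inv_cancel_comm]
  exact Cardinal.mk_le_of_surjective ((Quot.surjective_lift hconst).2 hf)

theorem SemidirectProduct.eq_comp_rightHom_of_comp_inl_eq_one {N G H : Type*} [Group N] [Group G]
    [Group H] {φ : G →* MulAut N} {f : N ⋊[φ] G →* H} (hf : f.comp inl = 1) :
    f = (f.comp inr).comp rightHom :=
  hom_ext (by rw [hf, MonoidHom.comp_assoc, rightHom_comp_inl, MonoidHom.comp_one])
    (by rw [MonoidHom.comp_assoc, rightHom_comp_inr, MonoidHom.comp_id])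

theorem MonoidHom.comp_self_eq_id_of_surjective {σ : Multiplicative ℤ →* Multiplicative ℤ}
    (hσ : Function.Surjective σ) : σ.comp σ = MonoidHom.id _ := by
  set e := (σ (.ofAdd 1)).toAdd
  have hσ_apply (k : ℤ) : σ (.ofAdd k) = .ofAdd (e * k) := by
    rw [σ.apply_mint, Int.ofAdd_mul, ofAdd_toAdd, toAdd_ofAdd]
  obtain ⟨n, hn⟩ := hσ (.ofAdd 1)
  rw [← ofAdd_toAdd n, hσ_apply] at hn
  obtain he | he := Int.eq_one_or_neg_one_of_mul_eq_one (Multiplicative.ofAdd.injective hn) <;>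
    ext <;> simp [hσ_apply, he]

section GammaGrp

variable {U : (Matrix (Fin 2) (Fin 2) ℤ)ˣ}

theorem GammaGrp.inl_mulVec (v : Fin 2 → ℤ) :
    (inl (.ofAdd ((U : Matrix (Fin 2) (Fin 2) ℤ) *ᵥ v)) : GammaGrp U) =
      inr (.ofAdd 1) * inl (.ofAdd v) * (inr (.ofAdd 1))⁻¹ := by
  rw [← map_inv, ← inl_aut]
  rfl

theorem GammaGrp.monoidHom_comp_inl_eq_one {H : Type*} [CommGroup H] [IsMulTorsionFree H]
    (hU : ((U : Matrix (Fin 2) (Fin 2) ℤ) - 1).det ≠ 0) (f : GammaGrp U →* H) :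
    f.comp inl = 1 := by
  have hzero := AddMonoidHom.eq_zero_of_map_mulVec_eq hU (MonoidHom.toAdditive (f.comp inl))
    fun v => by
      change Additive.ofMul (f (inl (.ofAdd (_ *ᵥ v)))) = Additive.ofMul (f (inl (.ofAdd v)))
      refine congrArg Additive.ofMul ?_
      rw [GammaGrp.inl_mulVec, map_mul, map_mul, map_inv, mul_inv_cancel_comm]
  exact MonoidHom.ext fun v => DFunLike.congr_fun hzero v.toAdd

end GammaGrp

/-- for `A ∈ SL(2,ℤ)` with `tr A > 2` and any automorphism `φ` of
`Γ_A = ℤ² ⋊_A ℤ`, the Reidemeister number of `φ ∘ φ` is infinite. -/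
theorem stmt19 (U : (Matrix (Fin 2) (Fin 2) ℤ)ˣ)
    (hdet : (U : Matrix (Fin 2) (Fin 2) ℤ).det = 1)
    (htr : 2 < (U : Matrix (Fin 2) (Fin 2) ℤ).trace)
    (φ : GammaGrp U ≃* GammaGrp U) :
    Cardinal.aleph0 ≤ reidemeisterNumber (φ.toMonoidHom.comp φ.toMonoidHom) := by
  have hU : ((U : Matrix (Fin 2) (Fin 2) ℤ) - 1).det ≠ 0 := by
    rw [det_sub_one_fin_two, hdet]
    omega
  set π : GammaGrp U →* Multiplicative ℤ := rightHom
  set σ : Multiplicative ℤ →* Multiplicative ℤ := (π.comp φ.toMonoidHom).comp inr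
  have hφ : π.comp φ.toMonoidHom = σ.comp π :=
    eq_comp_rightHom_of_comp_inl_eq_one (GammaGrp.monoidHom_comp_inl_eq_one hU _)
  have hσ : Function.Surjective σ := by
    refine .of_comp (g := π) ?_
    rw [← MonoidHom.coe_comp, ← hφ]
    exact rightHom_surjective.comp φ.surjective
  have hφφ : π.comp (φ.toMonoidHom.comp φ.toMonoidHom) = π := by
    rw [← MonoidHom.comp_assoc, hφ, MonoidHom.comp_assoc, hφ, ← MonoidHom.comp_assoc,
      MonoidHom.comp_self_eq_id_of_surjective hσ, MonoidHom.id_comp]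
  calc Cardinal.aleph0 = Cardinal.mk (Multiplicative ℤ) := Cardinal.mk_int.symm
    _ ≤ _ := mk_le_reidemeisterNumber rightHom_surjective hφφ
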